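/- arXiv:0710.3802 — 2 statements merged into one kernel-verified Lean document; each statement's English description precedes it below -/
import Mathlib

section
/- (Lemma 1 / a posteriori equivalence identity) Let h, f, g be finitely supported complex sequences and α > 0 a real number such that g̈ ⋆ f = α·ḧ (conjugate time-reversals). Let x, y be finitely supported sequences and set z = f ⋆ y. Define D̃(z, x) = ‖z − g ⋆ x‖², D(y, x) = ‖y − h ⋆ x‖², and s = g̈ ⋆ g − α·(ḧ ⋆ h). Then D̃(z, x) − ‖z‖² = ⟨x, s ⋆ x⟩ + α·(D(y, x) − ‖y‖²). -/
open scoped ComplexConjugate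

noncomputable def conv (a b : ℤ → ℂ) : ℤ → ℂ := fun n => ∑' m, a m * b (n - m)

noncomputable def inn (u v : ℤ → ℂ) : ℂ := ∑' n, conj (u n) * v n

noncomputable def ddot (a : ℤ → ℂ) : ℤ → ℂ := fun n => conj (a (-n))

def HasFinSupp (a : ℤ → ℂ) : Prop := (Function.support a).Finite

/-! ### Auxiliary lemmas -/

lemma summable_fin {ι : Type*} {F : ι → ℂ} {S : Set ι} (hS : S.Finite)
    (h : ∀ i, F i ≠ 0 → i ∈ S) : Summable F := by
  have hfin : (Function.support F).Finite := hS.subset h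
  exact summable_of_ne_finset_zero (s := hfin.toFinset)
    (fun n hn => by by_contra hc; exact hn (hfin.mem_toFinset.2 hc))

lemma conv_finsupp {a b : ℤ → ℂ} (ha : HasFinSupp a) (hb : HasFinSupp b) :
    HasFinSupp (conv a b) := by
  refine Set.Finite.subset (ha.add hb) ?_
  intro n hn
  simp only [Function.mem_support, conv] at hn
  obtain ⟨m, hm⟩ : ∃ m, a m * b (n - m) ≠ 0 := by
    by_contra hc
    push_neg at hc
    exact hn (by simp [hc])
  exact ⟨m, by simpa using fun h => hm (by simp [h]),
         n - m, by simpa using fun h => hm (by simp [h]), by ring⟩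

lemma ddot_finsupp {a : ℤ → ℂ} (ha : HasFinSupp a) : HasFinSupp (ddot a) := by
  refine Set.Finite.subset (ha.image (fun n => -n)) ?_
  intro n hn
  simp only [Function.mem_support, ddot] at hn
  exact ⟨-n, by simpa using hn, by ring⟩

lemma ddot_ddot (a : ℤ → ℂ) : ddot (ddot a) = a := by
  funext n; simp [ddot]

lemma conv_comm (a b : ℤ → ℂ) : conv a b = conv b a := by
  funext n
  show ∑' m, a m * b (n - m) = ∑' m, b m * a (n - m)
  rw [← (Equiv.subLeft n).tsum_eq (fun m => b m * a (n - m))]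
  refine tsum_congr fun m => ?_
  simp only [Equiv.subLeft_apply, sub_sub_cancel]
  try ring

lemma ddot_conv (a b : ℤ → ℂ) : ddot (conv a b) = conv (ddot a) (ddot b) := by
  funext n
  show conj (∑' m, a m * b (-n - m)) = ∑' m, conj (a (-m)) * conj (b (-(n - m)))
  rw [show conj (∑' m, a m * b (-n - m)) = star (∑' m, a m * b (-n - m)) from rfl,
    tsum_star, ← (Equiv.neg ℤ).tsum_eq (fun m => conj (a (-m)) * conj (b (-(n - m))))]
  refine tsum_congr fun m => ?_
  simp only [Equiv.neg_apply, neg_neg, star_mul', RCLike.star_def]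
  try rw [show -n - m = -(n - -m) by ring]
  try ring

lemma conv_smul_left (c : ℂ) (a x : ℤ → ℂ) :
    conv (fun n => c * a n) x = fun n => c * conv a x n := by
  funext n
  show ∑' m, (c * a m) * x (n - m) = c * ∑' m, a m * x (n - m)
  rw [← tsum_mul_left]
  exact tsum_congr fun m => by ring

lemma inn_smul_right (c : ℂ) (u w : ℤ → ℂ) :
    inn u (fun n => c * w n) = c * inn u w := by
  show ∑' n, conj (u n) * (c * w n) = c * ∑' n, conj (u n) * w n
  rw [← tsum_mul_left]
  exact tsum_congr fun n => by ring

lemma inn_conj (u v : ℤ → ℂ) : conj (inn v u) = inn u v := by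
  show star (∑' n, conj (v n) * u n) = ∑' n, conj (u n) * v n
  rw [tsum_star]
  refine tsum_congr fun n => ?_
  simp only [star_mul', RCLike.star_def, Complex.conj_conj]
  ring

lemma summable_inn_right (u w : ℤ → ℂ) (hw : HasFinSupp w) :
    Summable (fun n => conj (u n) * w n) :=
  summable_fin hw (fun n hn => by
    simp only [Function.mem_support]
    intro h; exact hn (by simp [h]))

lemma inn_sub_left {u v : ℤ → ℂ} (w : ℤ → ℂ) (hu : HasFinSupp u) (hv : HasFinSupp v) :
    inn (fun n => u n - v n) w = inn u w - inn v w := by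
  show ∑' n, conj (u n - v n) * w n = (∑' n, conj (u n) * w n) - ∑' n, conj (v n) * w n
  rw [← Summable.tsum_sub (summable_fin hu (fun n hn => by
        simp only [Function.mem_support]; intro h; exact hn (by simp [h])))
      (summable_fin hv (fun n hn => by
        simp only [Function.mem_support]; intro h; exact hn (by simp [h])))]
  exact tsum_congr fun n => by rw [map_sub]; ring

lemma inn_sub_right (u : ℤ → ℂ) {v w : ℤ → ℂ} (hv : HasFinSupp v) (hw : HasFinSupp w) :
    inn u (fun n => v n - w n) = inn u v - inn u w := by
  show ∑' n, conj (u n) * (v n - w n) = (∑' n, conj (u n) * v n) - ∑' n, conj (u n) * w n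
  rw [← Summable.tsum_sub (summable_inn_right u v hv) (summable_inn_right u w hw)]
  exact tsum_congr fun n => by ring

lemma conv_assoc (a b c : ℤ → ℂ) (ha : HasFinSupp a) (hc : HasFinSupp c) :
    conv (conv a b) c = conv a (conv b c) := by
  funext n
  show ∑' m, (∑' j, a j * b (m - j)) * c (n - m) = ∑' j, a j * ∑' m, b m * c (n - j - m)
  calc ∑' m, (∑' j, a j * b (m - j)) * c (n - m)
      = ∑' (m) (j), a j * b (m - j) * c (n - m) :=
        tsum_congr fun m => tsum_mul_right.symm
    _ = ∑' (j) (m), a j * b (m - j) * c (n - m) := by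
        refine Summable.tsum_comm' ?_ ?_ ?_
        · refine summable_fin (S := (Function.support a) ×ˢ ((fun t => n - t) '' Function.support c))
            (ha.prod (hc.image _)) ?_
          rintro ⟨j, m⟩ hjm
          simp only [Function.uncurry] at hjm
          constructor
          · simp only [Function.mem_support]; intro h; exact hjm (by simp [h])
          · exact ⟨n - m, by simpa using fun h => hjm (by simp [h]), by ring⟩
        · intro j
          refine summable_fin (S := (fun t => n - t) '' Function.support c) (hc.image _) ?_
          intro m hm
          exact ⟨n - m, by simpa using fun h => hm (by simp [h]), by ring⟩
        · intro m
          refine summable_fin (S := Function.support a) ha ?_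
          intro j hj
          simp only [Function.mem_support]; intro h; exact hj (by simp [h])
    _ = ∑' j, a j * ∑' m, b m * c (n - j - m) := by
        refine tsum_congr fun j => ?_
        rw [← tsum_mul_left,
          ← (Equiv.addRight j).tsum_eq (fun m => a j * b (m - j) * c (n - m))]
        refine tsum_congr fun m => ?_
        simp only [Equiv.coe_addRight, add_sub_cancel_right]
        rw [show n - (m + j) = n - j - m by ring]
        ring

lemma inn_conv_left (a u v : ℤ → ℂ) (ha : HasFinSupp a) (hu : HasFinSupp u)
    (hv : HasFinSupp v) : inn (conv a u) v = inn u (conv (ddot a) v) := by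
  show ∑' n, conj (∑' m, a m * u (n - m)) * v n
      = ∑' n, conj (u n) * ∑' m, conj (a (-m)) * v (n - m)
  calc ∑' n, conj (∑' m, a m * u (n - m)) * v n
      = ∑' n, (∑' m, conj (a m) * conj (u (n - m))) * v n := by
        refine tsum_congr fun n => ?_
        congr 1
        rw [show conj (∑' m, a m * u (n - m)) = star (∑' m, a m * u (n - m)) from rfl,
          tsum_star]
        exact tsum_congr fun m => by
          simp only [star_mul', RCLike.star_def]
          try ring
    _ = ∑' (n) (m), conj (a m) * conj (u (n - m)) * v n :=
        tsum_congr fun n => tsum_mul_right.symm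
    _ = ∑' (m) (n), conj (a m) * conj (u (n - m)) * v n := by
        refine Summable.tsum_comm' ?_ ?_ ?_
        · refine summable_fin (S := (Function.support a) ×ˢ (Function.support v))
            (ha.prod hv) ?_
          rintro ⟨m, n⟩ hmn
          simp only [Function.uncurry] at hmn
          constructor
          · simp only [Function.mem_support]; intro h; exact hmn (by simp [h])
          · simp only [Function.mem_support]; intro h; exact hmn (by simp [h])
        · intro m
          refine summable_fin (S := Function.support v) hv ?_
          intro n hn
          simp only [Function.mem_support]; intro h; exact hn (by simp [h])
        · intro n
          refine summable_fin (S := Function.support a) ha ?_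
          intro m hm
          simp only [Function.mem_support]; intro h; exact hm (by simp [h])
    _ = ∑' (m) (n), conj (a m) * conj (u n) * v (n + m) := by
        refine tsum_congr fun m => ?_
        rw [← (Equiv.addRight m).tsum_eq (fun n => conj (a m) * conj (u (n - m)) * v n)]
        exact tsum_congr fun n => by simp
    _ = ∑' (n) (m), conj (a m) * conj (u n) * v (n + m) := by
        refine Summable.tsum_comm' ?_ ?_ ?_
        · refine summable_fin (S := (Function.support u) ×ˢ (Function.support a))
            (hu.prod ha) ?_
          rintro ⟨m, n⟩ hmn
          simp only [Function.uncurry] at hmn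
          constructor
          · simp only [Function.mem_support]; intro h; exact hmn (by simp [h])
          · simp only [Function.mem_support]; intro h; exact hmn (by simp [h])
        · intro m
          refine summable_fin (S := Function.support a) ha ?_
          intro n hn
          simp only [Function.mem_support]; intro h; exact hn (by simp [h])
        · intro n
          refine summable_fin (S := Function.support u) hu ?_
          intro m hm
          simp only [Function.mem_support]; intro h; exact hm (by simp [h])
    _ = ∑' n, conj (u n) * ∑' m, conj (a (-m)) * v (n - m) := by
        refine tsum_congr fun n => ?_
        rw [← tsum_mul_left,
          ← (Equiv.neg ℤ).tsum_eq (fun m => conj (u n) * (conj (a (-m)) * v (n - m)))]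
        refine tsum_congr fun m => ?_
        simp only [Equiv.neg_apply, neg_neg, sub_neg_eq_add]
        ring

/-- Lemma 1: if `g̈ ⋆ f = α ḧ` with `α > 0`, and `z = f ⋆ y`,
`s = g̈ ⋆ g − α (ḧ ⋆ h)`, then
`D̃(z,x) − ‖z‖² = ⟨x, s ⋆ x⟩ + α (D(y,x) − ‖y‖²)`. -/
theorem lemma_one (h f g x y : ℤ → ℂ)
    (hh : HasFinSupp h) (hf : HasFinSupp f) (hg : HasFinSupp g)
    (hx : HasFinSupp x) (hy : HasFinSupp y)
    (α : ℝ) (hα : 0 < α)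
    (hyp : conv (ddot g) f = fun n => (α : ℂ) * ddot h n) :
    let z : ℤ → ℂ := conv f y
    let s : ℤ → ℂ := fun n => conv (ddot g) g n - (α : ℂ) * conv (ddot h) h n
    inn (fun n => z n - conv g x n) (fun n => z n - conv g x n) - inn z z
      = inn x (conv s x)
        + (α : ℂ) * (inn (fun n => y n - conv h x n) (fun n => y n - conv h x n)
            - inn y y) := by
  intro z s
  have hz : HasFinSupp z := conv_finsupp hf hy
  have hgx : HasFinSupp (conv g x) := conv_finsupp hg hx
  have hhx : HasFinSupp (conv h x) := conv_finsupp hh hx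
  -- key identity: f̈ ⋆ g = α h
  have e1 : conv (ddot f) g = fun n => (α : ℂ) * h n := by
    calc conv (ddot f) g = conv g (ddot f) := conv_comm _ _
      _ = conv (ddot (ddot g)) (ddot f) := by rw [ddot_ddot]
      _ = ddot (conv (ddot g) f) := (ddot_conv _ _).symm
      _ = ddot (fun n => (α : ℂ) * ddot h n) := by rw [hyp]
      _ = fun n => (α : ℂ) * h n := by
          funext n
          simp [ddot, Complex.conj_ofReal]
  -- cross terms
  have eA : inn z (conv g x) = (α : ℂ) * inn y (conv h x) := by
    calc inn z (conv g x) = inn y (conv (ddot f) (conv g x)) :=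
          inn_conv_left f y (conv g x) hf hy hgx
      _ = inn y (conv (conv (ddot f) g) x) := by
          rw [conv_assoc _ _ _ (ddot_finsupp hf) hx]
      _ = inn y (conv (fun n => (α : ℂ) * h n) x) := by rw [e1]
      _ = (α : ℂ) * inn y (conv h x) := by rw [conv_smul_left, inn_smul_right]
  have eA' : inn (conv g x) z = (α : ℂ) * inn (conv h x) y := by
    rw [← inn_conj (conv g x) z, eA, map_mul, Complex.conj_ofReal, inn_conj]
  -- quadratic term
  have eB : inn x (conv s x)
      = inn (conv g x) (conv g x) - (α : ℂ) * inn (conv h x) (conv h x) := by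
    have hs : conv s x = fun n =>
        conv (conv (ddot g) g) x n - (α : ℂ) * conv (conv (ddot h) h) x n := by
      funext n
      show ∑' m, (conv (ddot g) g m - (α : ℂ) * conv (ddot h) h m) * x (n - m) = _
      have s1 : Summable (fun m => conv (ddot g) g m * x (n - m)) :=
        summable_fin (S := (fun t => n - t) '' Function.support x) (hx.image _)
          (fun m hm => ⟨n - m, by simpa using fun hh0 => hm (by simp [hh0]), by ring⟩)
      have s2 : Summable (fun m => (α : ℂ) * (conv (ddot h) h m * x (n - m))) :=
        Summable.mul_left _ (summable_fin (S := (fun t => n - t) '' Function.support x)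
          (hx.image _)
          (fun m hm => ⟨n - m, by simpa using fun hh0 => hm (by simp [hh0]), by ring⟩))
      calc ∑' m, (conv (ddot g) g m - (α : ℂ) * conv (ddot h) h m) * x (n - m)
          = ∑' m, (conv (ddot g) g m * x (n - m)
              - (α : ℂ) * (conv (ddot h) h m * x (n - m))) :=
            tsum_congr fun m => by ring
        _ = (∑' m, conv (ddot g) g m * x (n - m))
              - ∑' m, (α : ℂ) * (conv (ddot h) h m * x (n - m)) := Summable.tsum_sub s1 s2
        _ = conv (conv (ddot g) g) x n - (α : ℂ) * conv (conv (ddot h) h) x n := by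
            rw [tsum_mul_left]; rfl
    rw [hs, inn_sub_right x
        (conv_finsupp (conv_finsupp (ddot_finsupp hg) hg) hx)
        (by
          have : HasFinSupp (conv (conv (ddot h) h) x) :=
            conv_finsupp (conv_finsupp (ddot_finsupp hh) hh) hx
          refine Set.Finite.subset this ?_
          intro n hn
          simp only [Function.mem_support] at hn ⊢
          intro h0; exact hn (by simp [h0]))]
    have eg : inn x (conv (conv (ddot g) g) x) = inn (conv g x) (conv g x) := by
      rw [conv_assoc _ _ _ (ddot_finsupp hg) hx]
      exact (inn_conv_left g x (conv g x) hg hx hgx).symm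
    have eh : inn x (conv (conv (ddot h) h) x) = inn (conv h x) (conv h x) := by
      rw [conv_assoc _ _ _ (ddot_finsupp hh) hx]
      exact (inn_conv_left h x (conv h x) hh hx hhx).symm
    have esmul : inn x (fun n => (α : ℂ) * conv (conv (ddot h) h) x n)
        = (α : ℂ) * inn x (conv (conv (ddot h) h) x) := inn_smul_right _ _ _
    rw [esmul, eg, eh]
  -- expansions of the two squared norms
  have exp1 : inn (fun n => z n - conv g x n) (fun n => z n - conv g x n)
      = inn z z - inn z (conv g x) - inn (conv g x) z
        + inn (conv g x) (conv g x) := by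
    rw [inn_sub_left _ hz hgx, inn_sub_right z hz hgx, inn_sub_right (conv g x) hz hgx]
    ring
  have exp2 : inn (fun n => y n - conv h x n) (fun n => y n - conv h x n)
      = inn y y - inn y (conv h x) - inn (conv h x) y
        + inn (conv h x) (conv h x) := by
    rw [inn_sub_left _ hy hhx, inn_sub_right y hy hhx, inn_sub_right (conv h x) hy hhx]
    ring
  rw [exp1, exp2, eA, eA', eB]
  ring
end

section
/- Let h be a finitely supported real sequence and a the causal part of its autocorrelation: a_n = r_n for n > 0, a_0 = r_0/2, a_n = 0 for n < 0, where r = ḧ ⋆ h (r_n = Σ_m h_m h_{m+n}). Then for every finitely supported real sequence x, ⟨x, a ⋆ x⟩ = (1/2)‖h ⋆ x‖². -/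
noncomputable def convR (a b : ℤ → ℝ) : ℤ → ℝ := fun n => ∑' m, a m * b (n - m)

noncomputable def innR (u v : ℤ → ℝ) : ℝ := ∑' n, u n * v n

def ddotR (a : ℤ → ℝ) : ℤ → ℝ := fun n => a (-n)

def HasFinSuppR (a : ℤ → ℝ) : Prop := (Function.support a).Finite

/-!
Because `r` is symmetric, `a + ä = r`; and since convolution by `a` is adjoint to convolution
by `ä`, `⟨x, a ⋆ x⟩ = ⟨x, ä ⋆ x⟩`. Hence `2 ⟨x, a ⋆ x⟩ = ⟨x, r ⋆ x⟩ = ⟨x, ḧ ⋆ (h ⋆ x)⟩ = ‖h ⋆ x‖²`.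
Finite supports make every double sum finite, which justifies the reorderings.
-/

open Function

section Sequences

variable {a b u v : ℤ → ℝ}

theorem HasFinSuppR.ddotR (ha : HasFinSuppR a) : HasFinSuppR (ddotR a) :=
  ha.preimage neg_injective.injOn

theorem HasFinSuppR.convR (ha : HasFinSuppR a) (hb : HasFinSuppR b) :
    HasFinSuppR (convR a b) := by
  refine (ha.add hb).subset fun n hn => ?_
  obtain ⟨m, hm⟩ : ∃ m, a m * b (n - m) ≠ 0 := by
    by_contra! h
    exact hn (by simp [_root_.convR, h])
  exact ⟨m, left_ne_zero_of_mul hm, n - m, right_ne_zero_of_mul hm, add_sub_cancel m n⟩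

theorem ddotR_ddotR (a : ℤ → ℝ) : ddotR (ddotR a) = a := by
  ext n
  simp [ddotR]

theorem convR_comm (a b : ℤ → ℝ) : convR a b = convR b a := by
  ext n
  rw [convR, convR, ← (Equiv.subLeft n).tsum_eq]
  simp [mul_comm]

theorem ddotR_convR (a b : ℤ → ℝ) : ddotR (convR a b) = convR (ddotR a) (ddotR b) := by
  ext n
  rw [ddotR, convR, convR, ← (Equiv.neg ℤ).tsum_eq]
  simp [ddotR, neg_add_eq_sub]

theorem innR_comm (u v : ℤ → ℝ) : innR u v = innR v u := by
  simp only [innR, mul_comm]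

theorem innR_add_right (hu : HasFinSuppR u) (v w : ℤ → ℝ) :
    innR u (v + w) = innR u v + innR u w := by
  have hsum : ∀ v : ℤ → ℝ, Summable fun n => u n * v n := fun v =>
    summable_of_hasFiniteSupport (hu.subset (support_mul_subset_left _ _))
  simp only [innR, Pi.add_apply, mul_add]
  exact (hsum v).tsum_add (hsum w)

theorem convR_add_left (a b : ℤ → ℝ) (hv : HasFinSuppR v) :
    convR (a + b) v = convR a v + convR b v := by
  ext n
  have hsum : ∀ a : ℤ → ℝ, Summable fun m => a m * v (n - m) := fun a =>
    summable_of_hasFiniteSupport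
      ((hv.preimage sub_right_injective.injOn).subset (support_mul_subset_right _ _))
  simp only [convR, Pi.add_apply, add_mul]
  exact (hsum a).tsum_add (hsum b)

theorem innR_convR (a : ℤ → ℝ) (hu : HasFinSuppR u) (hv : HasFinSuppR v) :
    innR u (convR a v) = innR (convR (ddotR a) u) v := by
  have hsum : Summable (uncurry fun n k => u n * (v k * a (n - k))) :=
    summable_of_hasFiniteSupport <| (hu.prod hv).subset fun p hp =>
      ⟨left_ne_zero_of_mul hp, left_ne_zero_of_mul (right_ne_zero_of_mul hp)⟩
  rw [innR_comm _ v, convR_comm a, convR_comm _ u]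
  simp only [innR, convR, ← tsum_mul_left, ddotR]
  rw [← hsum.tsum_comm]
  refine tsum_congr fun k => tsum_congr fun n => ?_
  rw [neg_sub]
  ring

theorem convR_assoc (ha : HasFinSuppR a) (hb : HasFinSuppR b) (c : ℤ → ℝ) :
    convR (convR a b) c = convR a (convR b c) := by
  ext n
  have hsum : Summable (uncurry fun m k => a k * b (m - k) * c (n - m)) :=
    summable_of_hasFiniteSupport <| ((ha.add hb).prod ha).subset fun p hp =>
      ⟨⟨p.2, left_ne_zero_of_mul (left_ne_zero_of_mul hp), p.1 - p.2,
        right_ne_zero_of_mul (left_ne_zero_of_mul hp), add_sub_cancel _ _⟩,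
        left_ne_zero_of_mul (left_ne_zero_of_mul hp)⟩
  simp only [convR, ← tsum_mul_right, ← tsum_mul_left]
  rw [← hsum.tsum_comm]
  refine tsum_congr fun k => ?_
  rw [← (Equiv.addLeft k).tsum_eq]
  refine tsum_congr fun j => ?_
  simp only [Equiv.coe_addLeft, add_sub_cancel_left, sub_add_eq_sub_sub]
  ring

end Sequences

noncomputable def causalPart (r : ℤ → ℝ) : ℤ → ℝ :=
  fun n => if 0 < n then r n else if n = 0 then r 0 / 2 else 0

theorem causalPart_add_ddotR {r : ℤ → ℝ} (hr : ddotR r = r) :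
    causalPart r + ddotR (causalPart r) = r := by
  ext n
  rcases lt_trichotomy n 0 with hn | rfl | hn
  · simp [causalPart, ddotR, hn.not_gt, hn.ne, hn.not_ge, ← congrFun hr n]
  · simp [causalPart, ddotR]
  · simp [causalPart, ddotR, hn, hn.ne', hn.le]

/-- With `r = ḧ ⋆ h` and `a` the causal part of `r`
(`a_n = r_n` for `n > 0`, `a_0 = r_0/2`, `a_n = 0` for `n < 0`),
one has `⟨x, a ⋆ x⟩ = (1/2)‖h ⋆ x‖²`. -/
theorem causal_part_autocorrelation (h x : ℤ → ℝ)
    (hh : HasFinSuppR h) (hx : HasFinSuppR x) :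
    let r : ℤ → ℝ := convR (ddotR h) h
    let a : ℤ → ℝ := fun n => if 0 < n then r n else if n = 0 then r 0 / 2 else 0
    innR x (convR a x) = (1 / 2) * ∑' n, (convR h x n) ^ 2 := by
  intro r
  show innR x (convR (causalPart r) x) = _
  set a := causalPart r
  have hr : ddotR r = r := by rw [ddotR_convR, ddotR_ddotR, convR_comm]
  have hsym : innR x (convR (ddotR a) x) = innR x (convR a x) := by
    rw [innR_convR _ hx hx, ddotR_ddotR, innR_comm]
  have hdouble : 2 * innR x (convR a x) = ∑' n, (convR h x n) ^ 2 :=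
    calc 2 * innR x (convR a x) = innR x (convR a x) + innR x (convR (ddotR a) x) := by
          rw [hsym]; ring
      _ = innR x (convR r x) := by
          rw [← innR_add_right hx, ← convR_add_left _ _ hx, causalPart_add_ddotR hr]
      _ = innR x (convR (ddotR h) (convR h x)) := by rw [convR_assoc hh.ddotR hh]
      _ = innR (convR h x) (convR h x) := by rw [innR_convR _ hx (hh.convR hx), ddotR_ddotR]
      _ = ∑' n, (convR h x n) ^ 2 := by simp only [innR, sq]
  linarith
end
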